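/- Let (G,⊕,0) be a monoidal groupoid with no zero divisors. Then the functor I : G → ⟨G,G⟩ is full onto isomorphisms: for every isomorphism φ : A → B in the bracket construction ⟨G,G⟩ there exists a morphism h : A → B in G with I(h) = φ. -/

import Mathlib

open CategoryTheory MonoidalCategory

universe v u

variable (G : Type u) [Groupoid.{v} G] [MonoidalCategory G]

/-- A representative of a morphism `A ⟶ B` in Quillen's bracket construction `⟨G,G⟩`:
a pair `(X, f)` with `f : X ⊗ A ⟶ B`. -/
structure BracketHomRep (A B : G) : Type (max u v) where
  X : G
  f : X ⊗ A ⟶ B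

namespace BracketHomRep

variable {G}

/-- Two representatives `(X, f)` and `(X', f')` are equivalent iff there is an isomorphism
`g : X ≅ X'` with `f' ∘ (g ⊕ id_A) = f`. -/
def Rel {A B : G} (p q : BracketHomRep G A B) : Prop :=
  ∃ g : p.X ≅ q.X, (g.hom ⊗ₘ 𝟙 A) ≫ q.f = p.f

theorem rel_refl {A B : G} (p : BracketHomRep G A B) : Rel p p :=
  ⟨Iso.refl _, by simp⟩

theorem rel_symm {A B : G} {p q : BracketHomRep G A B} (h : Rel p q) : Rel q p := by
  obtain ⟨g, hg⟩ := h
  refine ⟨g.symm, ?_⟩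
  rw [← hg, ← Category.assoc, tensorHom_comp_tensorHom]
  simp

theorem rel_trans {A B : G} {p q r : BracketHomRep G A B} (h₁ : Rel p q) (h₂ : Rel q r) :
    Rel p r := by
  obtain ⟨g, hg⟩ := h₁
  obtain ⟨g', hg'⟩ := h₂
  refine ⟨g ≪≫ g', ?_⟩
  rw [← hg, ← hg', ← Category.assoc, tensorHom_comp_tensorHom]
  simp

instance setoid (A B : G) : Setoid (BracketHomRep G A B) where
  r := Rel
  iseqv := ⟨rel_refl, rel_symm, rel_trans⟩

/-- Composition of representatives: `[X,f] ≫ [Y,g] = [Y ⊗ X, g ∘ (id_Y ⊗ f) ∘ α]`. -/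
def comp {A B C : G} (p : BracketHomRep G A B) (q : BracketHomRep G B C) :
    BracketHomRep G A C :=
  ⟨q.X ⊗ p.X, (α_ q.X p.X A).hom ≫ (𝟙 q.X ⊗ₘ p.f) ≫ q.f⟩

theorem comp_rel {A B C : G} {p p' : BracketHomRep G A B} {q q' : BracketHomRep G B C}
    (hp : Rel p p') (hq : Rel q q') : Rel (p.comp q) (p'.comp q') := by
  obtain ⟨g, hg⟩ := hp
  obtain ⟨k, hk⟩ := hq
  refine ⟨k ⊗ᵢ g, ?_⟩
  dsimp [comp]
  rw [← hg, ← hk]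
  calc ((k.hom ⊗ₘ g.hom) ⊗ₘ 𝟙 A) ≫ (α_ q'.X p'.X A).hom ≫ (𝟙 q'.X ⊗ₘ p'.f) ≫ q'.f
      = (α_ q.X p.X A).hom ≫ (k.hom ⊗ₘ (g.hom ⊗ₘ 𝟙 A)) ≫ (𝟙 q'.X ⊗ₘ p'.f) ≫ q'.f := by
        rw [← Category.assoc, associator_naturality, Category.assoc]
    _ = (α_ q.X p.X A).hom ≫ (k.hom ⊗ₘ ((g.hom ⊗ₘ 𝟙 A) ≫ p'.f)) ≫ q'.f := by
        rw [← Category.assoc (k.hom ⊗ₘ (g.hom ⊗ₘ 𝟙 A)), tensorHom_comp_tensorHom, Category.comp_id]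
    _ = (α_ q.X p.X A).hom ≫ ((𝟙 q.X ⊗ₘ ((g.hom ⊗ₘ 𝟙 A) ≫ p'.f)) ≫ (k.hom ⊗ₘ 𝟙 B)) ≫ q'.f := by
        rw [id_tensor_comp_tensor_id]
    _ = (α_ q.X p.X A).hom ≫ (𝟙 q.X ⊗ₘ (g.hom ⊗ₘ 𝟙 A) ≫ p'.f) ≫ (k.hom ⊗ₘ 𝟙 B) ≫ q'.f := by
        simp only [Category.assoc]

end BracketHomRep

/-- Morphisms in Quillen's bracket construction: equivalence classes `[X,f]`. -/
def BracketHom (A B : G) : Type (max u v) := Quotient (BracketHomRep.setoid A B)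

/-- The morphism `[X, f] : A ⟶ B` of `⟨G,G⟩`. -/
def BracketHom.mk {A B : G} (X : G) (f : X ⊗ A ⟶ B) : BracketHom G A B :=
  Quotient.mk _ ⟨X, f⟩

/-- The identity `[0, λ_A]`. -/
def BracketHom.id (A : G) : BracketHom G A A := BracketHom.mk G (𝟙_ G) (λ_ A).hom

/-- Composition in the bracket construction. -/
def BracketHom.comp {A B C : G} : BracketHom G A B → BracketHom G B C → BracketHom G A C :=
  Quotient.map₂ BracketHomRep.comp (fun _ _ hp _ _ hq => BracketHomRep.comp_rel hp hq)

theorem BracketHom.id_comp {A B : G} (φ : BracketHom G A B) :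
    BracketHom.comp G (BracketHom.id G A) φ = φ := by
  obtain ⟨p⟩ := φ
  apply Quotient.sound
  refine ⟨ρ_ p.X, ?_⟩
  dsimp [BracketHomRep.comp]
  simp only [MonoidalCategory.tensorHom_def]
  monoidal

theorem BracketHom.comp_id {A B : G} (φ : BracketHom G A B) :
    BracketHom.comp G φ (BracketHom.id G B) = φ := by
  obtain ⟨p⟩ := φ
  apply Quotient.sound
  refine ⟨λ_ p.X, ?_⟩
  dsimp [BracketHomRep.comp]
  simp only [MonoidalCategory.tensorHom_def]
  monoidal

theorem BracketHom.assoc {A B C D : G} (φ : BracketHom G A B) (ψ : BracketHom G B C)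
    (χ : BracketHom G C D) : BracketHom.comp G (BracketHom.comp G φ ψ) χ = BracketHom.comp G φ (BracketHom.comp G ψ χ) := by
  obtain ⟨p⟩ := φ; obtain ⟨q⟩ := ψ; obtain ⟨r⟩ := χ
  apply Quotient.sound
  refine ⟨(α_ r.X q.X p.X).symm, ?_⟩
  dsimp [BracketHomRep.comp]
  simp only [MonoidalCategory.tensorHom_def]
  monoidal

/-- Quillen's bracket construction `⟨G,G⟩` on the monoidal groupoid `G`: same objects as `G`. -/
def BracketCat : Type u := G

/-- The canonical identification of objects of `G` with objects of `⟨G,G⟩`. -/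
def BracketCat.of : G → BracketCat G := _root_.id

instance : Category.{max u v} (BracketCat G) where
  Hom A B := BracketHom G A B
  id A := BracketHom.id G A
  comp φ ψ := BracketHom.comp G φ ψ
  id_comp φ := BracketHom.id_comp G φ
  comp_id φ := BracketHom.comp_id G φ
  assoc φ ψ χ := BracketHom.assoc G φ ψ χ

/-- The canonical functor `I : G ⥤ ⟨G,G⟩`, identity on objects, sending `f : A ⟶ B`
to `[0, f ∘ λ_A]`. -/
def bracketFunctor : G ⥤ BracketCat G where
  obj := BracketCat.of G
  map {A B} f := show BracketHom G A B from BracketHom.mk G (𝟙_ G) ((λ_ A).hom ≫ f)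
  map_id A := by
    apply Quotient.sound
    exact ⟨Iso.refl _, by simp [BracketCat.of]⟩
  map_comp {A B C} f g := by
    apply Quotient.sound
    refine ⟨(λ_ (𝟙_ G)).symm, ?_⟩
    dsimp [BracketHomRep.comp]
    simp only [MonoidalCategory.tensorHom_def]
    monoidal

/-! If `ψ = [Y, g]` is a left inverse of `φ = [X, f]`, then `φ ≫ ψ = [Y ⊗ X, …]` is equivalent to
the identity `[𝟙_ G, λ_A]`, so `Y ⊗ X ≅ 𝟙_ G`. Without zero divisors `X ≅ 𝟙_ G`, and a morphism
`[X, f]` whose complement `X` is trivial comes from `G` by transporting `f` along `X ≅ 𝟙_ G`. -/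

namespace BracketHom

variable {G}

theorem mk_eq_mk_of_iso {A B X X' : G} (e : X ≅ X') (f : X' ⊗ A ⟶ B) :
    mk G X ((e.hom ⊗ₘ 𝟙 A) ≫ f) = mk G X' f :=
  Quotient.sound ⟨e, rfl⟩

theorem nonempty_tensor_iso_unit_of_comp_eq_id {A B X Y : G} {f : X ⊗ A ⟶ B}
    {g : Y ⊗ B ⟶ A} (h : comp G (mk G X f) (mk G Y g) = BracketHom.id G A) :
    Nonempty (Y ⊗ X ≅ 𝟙_ G) :=
  let ⟨e, _⟩ := Quotient.exact h
  ⟨e⟩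

end BracketHom

theorem exists_bracketFunctor_map_eq_mk_of_iso_unit {A B X : G} (e : X ≅ 𝟙_ G)
    (f : X ⊗ A ⟶ B) : ∃ h : A ⟶ B, (bracketFunctor G).map h = BracketHom.mk G X f := by
  refine ⟨(λ_ A).inv ≫ (e.inv ⊗ₘ 𝟙 A) ≫ f, ?_⟩
  change BracketHom.mk G (𝟙_ G) ((λ_ A).hom ≫ (λ_ A).inv ≫ (e.inv ⊗ₘ 𝟙 A) ≫ f) = _
  rw [Iso.hom_inv_id_assoc]
  exact BracketHom.mk_eq_mk_of_iso e.symm f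

/-- If the monoidal groupoid `G` has no zero divisors, then the canonical
functor `I : G ⥤ ⟨G,G⟩` is full onto isomorphisms: every isomorphism `φ : A ⟶ B` of the
bracket construction is of the form `I(h)` for some morphism `h : A ⟶ B` of `G`. -/
theorem bracketFunctor_full_on_isomorphisms (G : Type u) [Groupoid.{v} G] [MonoidalCategory G]
    (hzd : ∀ C C' : G, Nonempty (C ⊗ C' ≅ 𝟙_ G) →
      Nonempty (C ≅ 𝟙_ G) ∧ Nonempty (C' ≅ 𝟙_ G))
    {A B : G} (φ : BracketCat.of G A ⟶ BracketCat.of G B) (hφ : IsIso φ) :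
    ∃ h : A ⟶ B, (bracketFunctor G).map h = φ := by
  obtain ⟨ψ, hψ, -⟩ := hφ.out
  obtain ⟨⟨X, f⟩⟩ := φ
  obtain ⟨⟨Y, g⟩⟩ := ψ
  obtain ⟨-, ⟨e⟩⟩ := hzd Y X (BracketHom.nonempty_tensor_iso_unit_of_comp_eq_id hψ)
  exact exists_bracketFunctor_map_eq_mk_of_iso_unit G e f
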